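/- arXiv:0901.2660 — 5 statements merged into one kernel-verified Lean document; each statement's English description precedes it below -/
import Mathlib

section
/- Let W be a Coxeter group with generators s_1,...,s_n, and ~ the equivalence relation on generators generated by s_i ~ s_j whenever m_ij is odd. Then two distinguished generators s_i and s_j are conjugate in W if and only if s_i ~ s_j. -/
/-!
If `m = M i j` is odd, then with `x = s i * s j` one has `x ^ (2k) = x⁻¹` for `m = 2k + 1`,
and conjugating `s i` by `x ^ k` gives `x ^ (2k) * s i = s j`. Conversely, for any union `S`
of `~`-classes the map sending `s a` to `-1` when `a ∈ S` and to `1` otherwise respects the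
Coxeter relations, hence defines a character `W →* ℤˣ`; conjugate generators have equal
images, so they lie in the same `~`-class.
-/

theorem isConj_of_mul_pow_odd_eq_one {G : Type*} [Group G] {s t : G} (hs : s * s = 1)
    (ht : t * t = 1) {m : ℕ} (hm : Odd m) (h : (s * t) ^ m = 1) : IsConj s t := by
  obtain ⟨k, rfl⟩ := hm
  have hs' : s⁻¹ = s := inv_eq_of_mul_eq_one_right hs
  have ht' : t⁻¹ = t := inv_eq_of_mul_eq_one_right ht
  have hinv : (s * t)⁻¹ = t * s := by rw [mul_inv_rev, hs', ht']
  have hsq : (s * t) ^ (k + k) = t * s := by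
    rw [← hinv, eq_inv_iff_mul_eq_one, ← pow_succ, ← two_mul, h]
  have hsemi : SemiconjBy s ((t * s) ^ k) ((s * t) ^ k) :=
    SemiconjBy.pow_right (by simp only [SemiconjBy, mul_assoc]) k
  refine isConj_iff.mpr ⟨(s * t) ^ k, ?_⟩
  rw [← inv_pow, hinv, mul_assoc, hsemi.eq, ← mul_assoc, ← pow_add, hsq, mul_assoc, hs, mul_one]

theorem CoxeterMatrix.isLiftable_of_mul_self_eq_one {B G : Type*} [CommMonoid G]
    (M : CoxeterMatrix B) {f : B → G} (hsq : ∀ a, f a * f a = 1)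
    (hodd : ∀ a b, Odd (M a b) → f a = f b) : M.IsLiftable f := by
  intro a b
  rcases Nat.even_or_odd (M a b) with ⟨t, ht⟩ | hab
  · rw [ht, ← two_mul, pow_mul, sq, mul_mul_mul_comm, hsq, hsq, one_mul, one_pow]
  · rw [hodd a b hab, hsq, one_pow]

namespace CoxeterSystem

variable {B W : Type*} [Group W] {M : CoxeterMatrix B} (cs : CoxeterSystem M W)

theorem isConj_simple_of_odd {i j : B} (h : Odd (M i j)) : IsConj (cs.simple i) (cs.simple j) :=
  isConj_of_mul_pow_odd_eq_one (cs.simple_mul_simple_self i) (cs.simple_mul_simple_self j) h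
    (cs.simple_mul_simple_pow i j)

theorem mem_iff_mem_of_isConj_simple (S : Set B) (hS : ∀ a b, Odd (M a b) → (a ∈ S ↔ b ∈ S))
    {i j : B} (h : IsConj (cs.simple i) (cs.simple j)) : i ∈ S ↔ j ∈ S := by
  classical
  let f : B → ℤˣ := fun a => if a ∈ S then -1 else 1
  have hf : M.IsLiftable f :=
    M.isLiftable_of_mul_self_eq_one (fun a => by simp only [f]; split_ifs <;> simp)
      (fun a b hab => by simp only [f, hS a b hab])
  have hfij : f i = f j := by
    simpa only [lift_apply_simple] using isConj_iff_eq.mp ((cs.lift ⟨f, hf⟩).map_isConj h)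
  by_cases hi : i ∈ S <;> by_cases hj : j ∈ S <;> simp_all [f]

end CoxeterSystem

/-- Let `W` be a Coxeter group with generators `s i`, and `~` the equivalence relation on the
generator indices generated by `i ~ j` whenever `M i j` is (finite and) odd. Then two
distinguished generators `s i` and `s j` are conjugate in `W` if and only if `i ~ j`. -/
theorem stmt2 {n : ℕ} (M : CoxeterMatrix (Fin n)) {W : Type*} [Group W]
    (cs : CoxeterSystem M W) (i j : Fin n) :
    IsConj (cs.simple i) (cs.simple j) ↔
      Relation.EqvGen (fun a b : Fin n => Odd (M a b)) i j := by
  constructor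
  · intro h
    refine (cs.mem_iff_mem_of_isConj_simple {a | Relation.EqvGen _ i a} ?_ h).mp (.refl i)
    exact fun a b hab => ⟨fun hia => .trans _ _ _ hia (.rel _ _ hab),
      fun hib => .trans _ _ _ hib (.symm _ _ (.rel _ _ hab))⟩
  · intro h
    induction h with
    | rel a b hab => exact cs.isConj_simple_of_odd hab
    | refl a => exact .refl _
    | symm a b _ ih => exact ih.symm
    | trans a b c _ _ hab hbc => exact hab.trans hbc
end

section
/- Let W be a finitely generated Coxeter group with generators s_1,...,s_n such that the graph on {1,...,n} with edges {i,j} whenever m_ij is odd is connected. Then W is generated by the set of conjugates of s_n by elements of the parabolic subgroup W' = ⟨s_1,...,s_{n-1}⟩. -/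
/-!
If `m = m_ij` is odd, then `(s_j s_i)^(m-1) s_j = s_i`, and `(s_j s_i)^2 = s_j (s_i s_j s_i)`; hence
any subgroup containing `s_j` and stable under conjugation by `s_i` contains `s_i`. The subgroup
generated by the `W'`-conjugates of `s_n` contains `s_n` and is stable under conjugation by every
other simple reflection, so walking along the odd-edge graph from `n` it contains all simple
reflections.
-/

namespace Subgroup

variable {G : Type*} [Group G]

theorem conj_mem_closure_of_conj_mem {S : Set G} {g : G} (hS : ∀ x ∈ S, g * x * g⁻¹ ∈ S)
    {x : G} (hx : x ∈ closure S) : g * x * g⁻¹ ∈ closure S := by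
  have hmap : (closure S).map (MulAut.conj g).toMonoidHom ≤ closure S := by
    rw [MonoidHom.map_closure]
    exact closure_mono (Set.image_subset_iff.mpr hS)
  exact hmap (mem_map_of_mem _ hx)

theorem mem_of_mul_pow_odd_eq_one {H : Subgroup G} {x y : G} {m : ℕ} (hm : Odd m)
    (hyx : (y * x) ^ m = 1) (hy : y ∈ H) (hxyx : x * y * x ∈ H) : x ∈ H := by
  obtain ⟨k, rfl⟩ := hm
  have hprod : (y * (x * y * x)) ^ k * y = x⁻¹ := by
    calc (y * (x * y * x)) ^ k * y = (y * x) ^ (2 * k) * y := by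
          rw [pow_mul, sq]; group
      _ = (y * x) ^ (2 * k + 1) * x⁻¹ := by rw [pow_succ]; group
      _ = x⁻¹ := by rw [hyx, one_mul]
  rw [← inv_mem_iff, ← hprod]
  exact mul_mem (pow_mem (mul_mem hy hxyx) k) hy

end Subgroup

namespace CoxeterSystem

variable {B : Type*} {M : CoxeterMatrix B} {W : Type*} [Group W] (cs : CoxeterSystem M W)

theorem simple_mem_of_odd {H : Subgroup W} {i j : B} (hij : Odd (M i j))
    (hj : cs.simple j ∈ H) (hjconj : cs.simple i * cs.simple j * cs.simple i ∈ H) :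
    cs.simple i ∈ H :=
  Subgroup.mem_of_mul_pow_odd_eq_one hij (cs.simple_mul_simple_pow' i j) hj hjconj

theorem eq_top_of_simple_mem_of_conj_mem {H : Subgroup W} (i₀ : B)
    (hconn : ∀ i, Relation.EqvGen (fun a b => Odd (M a b)) i i₀) (hi₀ : cs.simple i₀ ∈ H)
    (hconj : ∀ i ≠ i₀, ∀ x ∈ H, cs.simple i * x * cs.simple i ∈ H) : H = ⊤ := by
  have hstep : ∀ i j, Odd (M i j) → cs.simple j ∈ H → cs.simple i ∈ H := by
    intro i j hij hj
    by_cases hi : i = i₀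
    · exact hi ▸ hi₀
    · exact cs.simple_mem_of_odd hij hj (hconj i hi _ hj)
  have hiff : ∀ a b, Relation.EqvGen (fun a b => Odd (M a b)) a b →
      (cs.simple a ∈ H ↔ cs.simple b ∈ H) := by
    intro a b hab
    induction hab with
    | rel a b h => exact ⟨hstep b a (M.symmetric a b ▸ h), hstep a b h⟩
    | refl a => rfl
    | symm a b _ ih => exact ih.symm
    | trans a b c _ _ ih₁ ih₂ => exact ih₁.trans ih₂
  rw [eq_top_iff, ← cs.subgroup_closure_range_simple, Subgroup.closure_le]
  rintro _ ⟨i, rfl⟩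
  exact (hiff i i₀ (hconn i)).mpr hi₀

end CoxeterSystem

/-- Let `W` be a finitely generated Coxeter group with generators `s 0, ..., s n` (the last
one playing the role of `s_n`) such that the graph on the generator indices with edges
`{i,j}` whenever `M i j` is odd is connected. Then `W` is generated by the set of conjugates
of `s n` by elements of the maximal parabolic subgroup `W' = ⟨s i : i ≠ n⟩`. -/
theorem stmt4 {n : ℕ} (M : CoxeterMatrix (Fin (n + 1))) {W : Type*} [Group W]
    (cs : CoxeterSystem M W)
    (hconn : ∀ i j : Fin (n + 1), Relation.EqvGen (fun a b => Odd (M a b)) i j) :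
    Subgroup.closure {x : W | ∃ w ∈ Subgroup.closure
        (cs.simple '' {i : Fin (n + 1) | i ≠ Fin.last n}),
        x = w⁻¹ * cs.simple (Fin.last n) * w} = ⊤ := by
  set W' := Subgroup.closure (cs.simple '' {i : Fin (n + 1) | i ≠ Fin.last n})
  set S : Set W := {x | ∃ w ∈ W', x = w⁻¹ * cs.simple (Fin.last n) * w}
  have hS : ∀ g ∈ W', ∀ x ∈ S, g * x * g⁻¹ ∈ S := by
    rintro g hg _ ⟨w, hw, rfl⟩
    exact ⟨w * g⁻¹, mul_mem hw (inv_mem hg), by group⟩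
  refine cs.eq_top_of_simple_mem_of_conj_mem (Fin.last n) (hconn · _)
    (Subgroup.subset_closure ⟨1, one_mem W', by simp⟩) fun i hi x hx => ?_
  have hiW' : cs.simple i ∈ W' := Subgroup.subset_closure ⟨i, hi, rfl⟩
  simpa only [cs.inv_simple] using Subgroup.conj_mem_closure_of_conj_mem (hS _ hiW') hx
end

section
/- Let W be a finitely generated Coxeter group with generators s_1,...,s_n, let W' = ⟨s_1,...,s_{n-1}⟩, and let X = {i ∈ {1,...,n-1} : m_in = 2}. Then the centralizer of s_n in W' equals the standard parabolic subgroup W_X = ⟨s_i : i ∈ X⟩. -/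
/-!
Work in the Tits representation of `W` on `ℝ^B`, with simple roots `α_i` and the invariant
form `B(α_i, α_j) = -cos (π / m_ij)`, and use Tits' lemma: the coordinates of `w α_i` are all
`≥ 0` unless `s_i` is a right descent of `w`, in which case they are all `≤ 0`.
Elements of `W' = ⟨s_i : i ≠ n⟩` do not change the `n`-th coordinate. So for `w ∈ W'` the
vector `w⁻¹ α_n` has `n`-coordinate `1`, hence `s_n` is not a descent of `w`, and if `w`
commutes with `s_n` then `w⁻¹ α_n = α_n`. If `s_i` is a left descent of such a `w`, then
`w⁻¹ α_i ≤ 0` has vanishing `n`-coordinate, so `B(α_i, α_n) = B(w⁻¹ α_i, α_n) ≥ 0` because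
the off-diagonal entries of `B` are `≤ 0`. Thus `m_in = 2`, `s_i w` again lies in `W'` and
commutes with `s_n`, and induction on the length of `w` concludes.
-/

open Real Polynomial Chebyshev

lemma Polynomial.Chebyshev.S_eval_add_one {R : Type*} [CommRing R] (a : R) (n : ℤ) :
    (S R (n + 1)).eval a = a * (S R n).eval a - (S R (n - 1)).eval a := by
  simp [S_add_one]

namespace Module

section CommRing

variable {R V : Type*} [CommRing R] [AddCommGroup V] [Module R V] {x y : V} {f g : Dual R V}
  {a : R}

lemma reflection_mul_reflection_pow_apply_self_eq (hf : f x = 2) (hg : g y = 2)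
    (hfy : f y = -a) (hgx : g x = -a) (l : ℕ) :
    ((reflection hf * reflection hg) ^ l) x =
      (S R (2 * l)).eval a • x + (S R (2 * l - 1)).eval a • y := by
  induction l with
  | zero => simp
  | succ l ih =>
    rw [pow_succ', LinearEquiv.mul_apply, ih, LinearEquiv.mul_apply]
    simp only [reflection_apply, map_add, map_sub, map_smul, hf, hg, hfy, hgx]
    have e1 := S_eval_add_one a (2 * l)
    have e2 := S_eval_add_one a (2 * l + 1)
    rw [show 2 * ((l + 1 : ℕ) : ℤ) = 2 * l + 1 + 1 by push_cast; ring, add_sub_cancel_right]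
    rw [add_sub_cancel_right] at e2
    match_scalars
    · linear_combination -e2 - a * e1
    · linear_combination -e1

lemma reflection_mul_reflection_mul_reflection_pow_apply_self_eq (hf : f x = 2)
    (hg : g y = 2) (hfy : f y = -a) (hgx : g x = -a) (l : ℕ) :
    (reflection hg * (reflection hf * reflection hg) ^ l) x =
      (S R (2 * l)).eval a • x + (S R (2 * l + 1)).eval a • y := by
  rw [LinearEquiv.mul_apply, reflection_mul_reflection_pow_apply_self_eq hf hg hfy hgx]
  simp only [reflection_apply, map_add, map_smul, hg, hgx]
  have e1 := S_eval_add_one a (2 * l)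
  match_scalars
  · ring
  · linear_combination -e1

end CommRing

variable {K V : Type*} [Field K] [AddCommGroup V] [Module K V] {x y : V} {f g : Dual K V}
  {a : K}

/-- Every vector splits along `x`, `y` and the common kernel of `f` and `g`, because the
determinant `4 - a ^ 2` of `f, g` on `x, y` is nonzero. -/
lemma reflection_mul_reflection_pow_eq_one (hf : f x = 2) (hg : g y = 2) (hfy : f y = -a)
    (hgx : g x = -a) (ha : a ^ 2 ≠ 4) {m : ℕ}
    (hx : ((reflection hf * reflection hg) ^ m) x = x)
    (hy : ((reflection hg * reflection hf) ^ m) y = y) :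
    (reflection hf * reflection hg) ^ m = 1 := by
  set T := (reflection hf * reflection hg) ^ m
  have hTy : T y = y := by
    have hT : T = ((reflection hg * reflection hf) ^ m)⁻¹ := by
      simp only [T, ← inv_pow, mul_inv_rev, reflection_inv]
    rw [hT, LinearEquiv.coe_inv, LinearEquiv.symm_apply_eq, hy]
  have hd : 4 - a ^ 2 ≠ 0 := sub_ne_zero.mpr (Ne.symm ha)
  ext v
  set p := (2 * f v + a * g v) / (4 - a ^ 2)
  set q := (2 * g v + a * f v) / (4 - a ^ 2)
  set u := v - p • x - q • y
  have hfu : f u = 0 := by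
    simp only [u, map_sub, map_smul, hf, hfy, smul_eq_mul, p, q]
    field_simp
    ring
  have hgu : g u = 0 := by
    simp only [u, map_sub, map_smul, hg, hgx, smul_eq_mul, p, q]
    field_simp
    ring
  have hTu : T u = u := by
    rw [LinearEquiv.pow_apply]
    exact Function.iterate_fixed (by simp [reflection_apply, hfu, hgu]) m
  have hv : v = p • x + q • y + u := by simp only [u]; abel
  rw [LinearEquiv.coe_one, id, hv, map_add, map_add, map_smul, map_smul, hx, hTy, hTu]


end Module

lemma sin_pi_div_natCast_pos {m : ℕ} (hm : 2 ≤ m) : 0 < sin (π / m) := by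
  have hm' : (2 : ℝ) ≤ m := by exact_mod_cast hm
  apply sin_pos_of_pos_of_lt_pi (by positivity)
  rw [div_lt_iff₀ (by positivity)]
  nlinarith [pi_pos]

lemma cos_pi_div_natCast_pos {m : ℕ} (h1 : m ≠ 1) (h2 : m ≠ 2) : 0 < cos (π / m) := by
  rcases Nat.eq_zero_or_pos m with rfl | hm
  · simp
  have hm' : (3 : ℝ) ≤ m := by exact_mod_cast (show 3 ≤ m by omega)
  apply cos_pos_of_mem_Ioo ⟨by linarith [pi_pos, show 0 < π / m by positivity], ?_⟩
  rw [div_lt_div_iff₀ (by positivity) two_pos]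
  nlinarith [pi_pos]

lemma cos_pi_div_natCast_nonneg {m : ℕ} (h1 : m ≠ 1) : 0 ≤ cos (π / m) := by
  rcases eq_or_ne m 2 with rfl | h2
  · simp
  · exact (cos_pi_div_natCast_pos h1 h2).le

lemma S_eval_two_mul_cos_pi_div_nonneg {m : ℕ} (h1 : m ≠ 1) {n : ℤ} (hn : -1 ≤ n)
    (hnm : m = 0 ∨ n < m) : 0 ≤ (S ℝ n).eval (2 * cos (π / m)) := by
  rcases eq_or_ne m 0 with rfl | hm0
  · have : (-1 : ℝ) ≤ n := by exact_mod_cast hn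
    simp [S_eval_two]
    linarith
  replace hnm := hnm.resolve_left hm0
  have hm : 2 ≤ m := by omega
  have hsin := sin_pi_div_natCast_pos hm
  refine nonneg_of_mul_nonneg_left ?_ hsin
  rw [S_two_mul_real_cos]
  apply sin_nonneg_of_nonneg_of_le_pi
  · have : (0 : ℝ) ≤ n + 1 := by exact_mod_cast (show 0 ≤ n + 1 by omega)
    positivity
  · have : (n : ℝ) + 1 ≤ m := by exact_mod_cast (show n + 1 ≤ m by omega)
    calc (n + 1 : ℝ) * (π / m) ≤ m * (π / m) := by gcongr
      _ = π := by field_simp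

lemma S_eval_two_mul_cos_pi_div_two_mul {m : ℕ} (hm : 2 ≤ m) :
    (S ℝ (2 * m)).eval (2 * cos (π / m)) = 1 := by
  have hsin := sin_pi_div_natCast_pos hm
  refine mul_right_cancel₀ hsin.ne' ?_
  rw [S_two_mul_real_cos, one_mul]
  have : ((2 * m : ℤ) + 1 : ℝ) * (π / m) = π / m + 2 * π := by
    push_cast
    field_simp
    ring
  rw [this, sin_add_two_pi]

lemma S_eval_two_mul_cos_pi_div_two_mul_sub_one {m : ℕ} (hm : 2 ≤ m) :
    (S ℝ (2 * m - 1)).eval (2 * cos (π / m)) = 0 := by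
  have hsin := sin_pi_div_natCast_pos hm
  refine mul_right_cancel₀ hsin.ne' ?_
  rw [S_two_mul_real_cos, zero_mul]
  have : ((2 * m - 1 : ℤ) + 1 : ℝ) * (π / m) = (2 : ℕ) * π := by
    push_cast
    field_simp
    ring
  rw [this, sin_nat_mul_pi]

lemma two_mul_cos_pi_div_sq_ne_four {m : ℕ} (hm : 2 ≤ m) : (2 * cos (π / m)) ^ 2 ≠ 4 := by
  have hsin := sin_pi_div_natCast_pos hm
  nlinarith [sin_sq_add_cos_sq (π / m)]

namespace CoxeterMatrix

variable {B : Type*} [Fintype B] [DecidableEq B] (M : CoxeterMatrix B)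

/-- Since `π / 0 = 0` in Lean, the entry `M i j = 0` (encoding `m = ∞`) yields `-cos 0 = -1`,
as it should. -/
noncomputable def cosForm : LinearMap.BilinForm ℝ (B → ℝ) :=
  Matrix.toLinearMap₂' ℝ (Matrix.of fun i j => -cos (π / M i j))

@[simp]
lemma cosForm_single_single (i j : B) :
    M.cosForm (Pi.single i 1) (Pi.single j 1) = -cos (π / M i j) := by
  simp [cosForm, Matrix.toLinearMap₂'_apply']

lemma cosForm_isSymm : LinearMap.IsSymm M.cosForm := by
  refine LinearMap.isSymm_def.2 fun x y => ?_
  simp only [cosForm, Matrix.toLinearMap₂'_apply, RingHom.id_apply, Matrix.of_apply, smul_eq_mul]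
  rw [Finset.sum_comm]
  refine Finset.sum_congr rfl fun i _ => Finset.sum_congr rfl fun j _ => ?_
  rw [M.symmetric]
  ring

lemma cosForm_apply_single_nonneg {v : B → ℝ} (hv : v ≤ 0) {a : B} (hva : v a = 0) :
    0 ≤ M.cosForm v (Pi.single a 1) := by
  simp only [cosForm, Matrix.toLinearMap₂'_apply', Matrix.mulVec_single_one, dotProduct]
  refine Finset.sum_nonneg fun b _ => ?_
  rcases eq_or_ne b a with rfl | hba
  · simp [hva]
  · simpa using mul_nonneg_of_nonpos_of_nonpos (hv b)
      (neg_nonpos.mpr (cos_pi_div_natCast_nonneg (M.off_diagonal b a hba)))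

lemma isReflective_single (i : B) : M.cosForm.IsReflective (Pi.single i 1) :=
  .of_dvd_two _ (by simp)

lemma coroot_single_apply (i : B) (v : B → ℝ) :
    (M.isReflective_single i).coroot M.cosForm v = 2 * M.cosForm (Pi.single i 1) v := by
  simpa using (M.isReflective_single i).apply_self_mul_coroot_apply M.cosForm (y := v)

noncomputable def simpleReflection (i : B) : (B → ℝ) ≃ₗ[ℝ] (B → ℝ) :=
  Module.reflection ((M.isReflective_single i).coroot_apply_self M.cosForm)

lemma coroot_single_single (i j : B) :
    (M.isReflective_single i).coroot M.cosForm (Pi.single j 1) = -(2 * cos (π / M i j)) := by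
  rw [coroot_single_apply, cosForm_single_single]
  ring

lemma isOrthogonal_simpleReflection (i : B) : M.cosForm.IsOrthogonal (M.simpleReflection i) :=
  (M.isReflective_single i).isOrthogonal_reflection M.cosForm M.cosForm_isSymm

lemma simpleReflection_mul_simpleReflection_pow_apply_single {i j : B} (l : ℕ) :
    ((M.simpleReflection i * M.simpleReflection j) ^ l) (Pi.single i 1) =
      (S ℝ (2 * l)).eval (2 * cos (π / M i j)) • Pi.single i 1 +
        (S ℝ (2 * l - 1)).eval (2 * cos (π / M i j)) • Pi.single j 1 :=
  Module.reflection_mul_reflection_pow_apply_self_eq _ _ (M.coroot_single_single i j)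
    (by rw [coroot_single_single, M.symmetric]) l

lemma simpleReflection_mul_simpleReflection_mul_simpleReflection_pow_apply_single {i j : B}
    (l : ℕ) :
    (M.simpleReflection j * (M.simpleReflection i * M.simpleReflection j) ^ l) (Pi.single i 1) =
      (S ℝ (2 * l)).eval (2 * cos (π / M i j)) • Pi.single i 1 +
        (S ℝ (2 * l + 1)).eval (2 * cos (π / M i j)) • Pi.single j 1 :=
  Module.reflection_mul_reflection_mul_reflection_pow_apply_self_eq _ _
    (M.coroot_single_single i j) (by rw [coroot_single_single, M.symmetric]) l

lemma simpleReflection_mul_simpleReflection_pow_apply_single_self {i j : B} (hm : 2 ≤ M i j) :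
    ((M.simpleReflection i * M.simpleReflection j) ^ M i j) (Pi.single i 1) = Pi.single i 1 := by
  rw [simpleReflection_mul_simpleReflection_pow_apply_single,
    S_eval_two_mul_cos_pi_div_two_mul hm, S_eval_two_mul_cos_pi_div_two_mul_sub_one hm]
  simp

lemma isLiftable_simpleReflection : M.IsLiftable M.simpleReflection := by
  intro i j
  rcases eq_or_ne i j with rfl | hij
  · rw [M.diagonal, pow_one, simpleReflection, mul_eq_one_iff_eq_inv, Module.reflection_inv]
  rcases eq_or_ne (M i j) 0 with h0 | h0
  · rw [h0, pow_zero]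
  have hm : 2 ≤ M i j := by have := M.off_diagonal i j hij; omega
  refine Module.reflection_mul_reflection_pow_eq_one _ _ (M.coroot_single_single i j)
    (by rw [coroot_single_single, M.symmetric]) (two_mul_cos_pi_div_sq_ne_four hm)
    (M.simpleReflection_mul_simpleReflection_pow_apply_single_self hm) ?_
  have := M.simpleReflection_mul_simpleReflection_pow_apply_single_self (i := j) (j := i)
    (by rwa [M.symmetric])
  rwa [M.symmetric] at this

end CoxeterMatrix

namespace CoxeterSystem

variable {B : Type*} {M : CoxeterMatrix B} {W : Type*} [Group W] (cs : CoxeterSystem M W)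

local prefix:100 "s" => cs.simple
local prefix:100 "ℓ" => cs.length

theorem exists_eq_mul_wordProd_alternatingWord {i j : B} (hij : i ≠ j) {w : W}
    (hi : ¬cs.IsRightDescent w i) (hj : cs.IsRightDescent w j) :
    ∃ u k, 0 < k ∧ w = u * cs.wordProd (alternatingWord i j k) ∧ ℓ w = ℓ u + k ∧
      ¬cs.IsRightDescent u i ∧ ¬cs.IsRightDescent u j := by
  induction hL : ℓ w using Nat.strong_induction_on generalizing w i j with
  | _ L IH =>
    have hlen : ℓ (w * s j) + 1 = ℓ w := cs.isRightDescent_iff.mp hj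
    have hj' : ¬cs.IsRightDescent (w * s j) j := cs.isRightDescent_iff_not_isRightDescent_mul.mp hj
    by_cases hi' : cs.IsRightDescent (w * s j) i
    · obtain ⟨u, k, -, hwu, hlenu, hui, huj⟩ := IH _ (by omega) hij.symm hj' hi' rfl
      refine ⟨u, k + 1, k.succ_pos, ?_, by omega, huj, hui⟩
      rw [alternatingWord_succ, wordProd_concat, ← mul_assoc, ← hwu,
        simple_mul_simple_cancel_right]
    · refine ⟨w * s j, 1, one_pos, ?_, by omega, hi', hj'⟩
      rw [show alternatingWord i j 1 = [j] from rfl, wordProd_singleton,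
        simple_mul_simple_cancel_right]

/-- For `k = M i j` the braid relation turns the alternating word into one ending in `i`. -/
theorem lt_of_length_mul_wordProd_alternatingWord {u : W} {i j : B} {k : ℕ} (hM : M i j ≠ 0)
    (hlen : ℓ (u * cs.wordProd (alternatingWord i j k)) = ℓ u + k)
    (hi : ¬cs.IsRightDescent (u * cs.wordProd (alternatingWord i j k)) i) : k < M i j := by
  have hle (i j : B) (k : ℕ) : ℓ (cs.wordProd (alternatingWord i j k)) ≤ k := by
    simpa using cs.length_wordProd_le (alternatingWord i j k)
  by_contra hk
  rcases (not_lt.mp hk).lt_or_eq with hk | rfl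
  · have hred := cs.not_isReduced_alternatingWord i j hM hk
    have := cs.length_mul_le u (cs.wordProd (alternatingWord i j k))
    have := hle i j k
    simp only [IsReduced, length_alternatingWord] at hred
    omega
  · obtain ⟨k, hk⟩ := Nat.exists_eq_add_one_of_ne_zero hM
    have hbraid := cs.wordProd_braidWord_eq i j
    rw [braidWord, braidWord, M.symmetric j i, hk, alternatingWord_succ j i,
      wordProd_concat] at hbraid
    rw [hk] at hlen hi
    apply hi
    rw [IsRightDescent, hlen, hbraid, ← mul_assoc, simple_mul_simple_cancel_right]
    have := cs.length_mul_le u (cs.wordProd (alternatingWord i j k))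
    have := hle i j k
    omega

lemma commute_simple_simple {i j : B} (h : M i j = 2) : Commute (s i) (s j) := by
  have := cs.simple_mul_simple_pow i j
  rwa [h, pow_two, mul_eq_one_iff_eq_inv, mul_inv_rev, inv_simple, inv_simple] at this

variable [Fintype B] [DecidableEq B]

noncomputable def geometricRepresentation : W →* (B → ℝ) ≃ₗ[ℝ] (B → ℝ) :=
  cs.lift ⟨M.simpleReflection, M.isLiftable_simpleReflection⟩

local notation "ρ" => cs.geometricRepresentation

@[simp]
lemma geometricRepresentation_simple (i : B) : ρ (s i) = M.simpleReflection i :=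
  cs.lift_apply_simple _ i

lemma geometricRepresentation_simple_apply (i : B) (v : B → ℝ) :
    ρ (s i) v = v - (2 * M.cosForm (Pi.single i 1) v) • Pi.single i 1 := by
  rw [geometricRepresentation_simple, CoxeterMatrix.simpleReflection, Module.reflection_apply,
    CoxeterMatrix.coroot_single_apply]

lemma isOrthogonal_geometricRepresentation (w : W) : M.cosForm.IsOrthogonal (ρ w) := by
  induction w using cs.simple_induction with
  | simple i => simpa using M.isOrthogonal_simpleReflection i
  | one => exact fun _ _ => by rw [map_one]; rfl
  | mul w₁ w₂ h₁ h₂ => intro x y; simp [h₁ _ _, h₂ _ _]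

theorem exists_geometricRepresentation_alternatingWord_apply_single {i j : B} (hij : i ≠ j)
    {k : ℕ} (hk : M i j = 0 ∨ k < M i j) :
    ∃ p q : ℝ, 0 ≤ p ∧ 0 ≤ q ∧
      ρ (cs.wordProd (alternatingWord i j k)) (Pi.single i 1) =
        p • Pi.single i 1 + q • Pi.single j 1 := by
  have hM : M i j ≠ 1 := M.off_diagonal i j hij
  have hS {n : ℤ} (h₁ : -1 ≤ n) (h₂ : n ≤ k) : 0 ≤ (S ℝ n).eval (2 * cos (π / M i j)) :=
    S_eval_two_mul_cos_pi_div_nonneg hM h₁ (hk.imp_right fun h => by omega)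
  rw [prod_alternatingWord_eq_mul_pow, map_mul, map_pow, map_mul]
  obtain ⟨l, rfl | rfl⟩ := Nat.even_or_odd' k
  · rw [if_pos (even_two_mul l), map_one, one_mul, Nat.mul_div_cancel_left l two_pos,
      geometricRepresentation_simple, geometricRepresentation_simple,
      M.simpleReflection_mul_simpleReflection_pow_apply_single]
    exact ⟨_, _, hS (by omega) (by push_cast; omega), hS (by omega) (by push_cast; omega),
      rfl⟩
  · rw [if_neg (Nat.not_even_two_mul_add_one l), show (2 * l + 1) / 2 = l by omega,
      geometricRepresentation_simple, geometricRepresentation_simple,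
      M.simpleReflection_mul_simpleReflection_mul_simpleReflection_pow_apply_single]
    exact ⟨_, _, hS (by omega) (by push_cast; omega), hS (by omega) (by push_cast; omega),
      rfl⟩

/-- Tits' lemma. Split `w = u * π (alternatingWord i j k)` with `ℓ w = ℓ u + k`, where `u` has
neither `i` nor `j` as a right descent; in rank two `π (alternatingWord i j k) α_i` is a
nonnegative combination of `α_i` and `α_j` as long as `k < M i j`. -/
theorem geometricRepresentation_apply_single_nonneg {w : W} {i : B}
    (hi : ¬cs.IsRightDescent w i) : 0 ≤ ρ w (Pi.single i 1) := by
  induction hL : ℓ w using Nat.strong_induction_on generalizing w i with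
  | _ L IH =>
    rcases eq_or_ne w 1 with rfl | hw
    · simp [Pi.single_nonneg]
    obtain ⟨j, hj⟩ := cs.exists_rightDescent_of_ne_one hw
    have hij : i ≠ j := by rintro rfl; exact hi hj
    obtain ⟨u, k, hk, rfl, hlen, hui, huj⟩ :=
      cs.exists_eq_mul_wordProd_alternatingWord hij hi hj
    have hkM : M i j = 0 ∨ k < M i j :=
      or_iff_not_imp_left.2 fun h0 => cs.lt_of_length_mul_wordProd_alternatingWord h0 hlen hi
    obtain ⟨p, q, hp, hq, h⟩ :=
      cs.exists_geometricRepresentation_alternatingWord_apply_single hij hkM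
    rw [map_mul, LinearEquiv.mul_apply, h, map_add, map_smul, map_smul]
    exact add_nonneg (smul_nonneg hp (IH _ (by omega) hui rfl))
      (smul_nonneg hq (IH _ (by omega) huj rfl))

theorem geometricRepresentation_apply_single_nonpos {w : W} {i : B}
    (hi : cs.IsRightDescent w i) : ρ w (Pi.single i 1) ≤ 0 := by
  have h := cs.geometricRepresentation_apply_single_nonneg
    (cs.isRightDescent_iff_not_isRightDescent_mul.mp hi)
  rw [map_mul, LinearEquiv.mul_apply, geometricRepresentation_simple,
    CoxeterMatrix.simpleReflection, Module.reflection_apply_self, map_neg] at h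
  exact neg_nonneg.mp h

variable {J : Set B} {a : B}

theorem geometricRepresentation_apply_apply_of_mem_closure (ha : a ∉ J) {w : W}
    (hw : w ∈ Subgroup.closure (cs.simple '' J)) (v : B → ℝ) : ρ w v a = v a := by
  revert v
  induction hw using Subgroup.closure_induction with
  | mem x hx =>
    obtain ⟨i, hi, rfl⟩ := hx
    intro v
    rw [geometricRepresentation_simple_apply]
    simp [(ne_of_mem_of_not_mem hi ha).symm]
  | one => intro v; rw [map_one]; rfl
  | mul x y _ _ hx hy => intro v; rw [map_mul, LinearEquiv.mul_apply, hx, hy]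
  | inv x _ hx => intro v; simpa using (hx ((ρ x).symm v)).symm

theorem not_isLeftDescent_of_mem_closure (ha : a ∉ J) {w : W}
    (hw : w ∈ Subgroup.closure (cs.simple '' J)) : ¬cs.IsLeftDescent w a := by
  intro h
  have hneg :=
    cs.geometricRepresentation_apply_single_nonpos (cs.isRightDescent_inv_iff.mpr h) a
  rw [cs.geometricRepresentation_apply_apply_of_mem_closure ha (inv_mem hw),
    Pi.single_eq_same] at hneg
  exact one_pos.not_ge hneg

/-- `s_a` negates `v = w α_a`, so `v` is a multiple of `α_a`; its `a`-coordinate is `1`. -/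
theorem geometricRepresentation_apply_single_of_commute (ha : a ∉ J) {w : W}
    (hw : w ∈ Subgroup.closure (cs.simple '' J)) (hc : Commute w (s a)) :
    ρ w (Pi.single a 1) = Pi.single a 1 := by
  set v := ρ w (Pi.single a 1)
  set c := 2 * M.cosForm (Pi.single a 1) v
  have hrefl : v - c • Pi.single a 1 = -v := by
    rw [← cs.geometricRepresentation_simple_apply a v, ← LinearEquiv.mul_apply, ← map_mul,
      ← hc.eq, map_mul, LinearEquiv.mul_apply, geometricRepresentation_simple,
      CoxeterMatrix.simpleReflection, Module.reflection_apply_self, map_neg]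
  have hcoord (b : B) : 2 * v b = c * (Pi.single a 1 : B → ℝ) b := by
    have := congrFun hrefl b
    simp only [Pi.sub_apply, Pi.smul_apply, smul_eq_mul, Pi.neg_apply] at this
    linarith
  have hva : v a = 1 := by simp [v, cs.geometricRepresentation_apply_apply_of_mem_closure ha hw]
  have hc2 : c = 2 := by simpa [hva] using (hcoord a).symm
  ext b
  have := hcoord b
  rw [hc2] at this
  linarith

theorem coxeterMatrix_eq_two_of_isLeftDescent (ha : a ∉ J) {w : W}
    (hw : w ∈ Subgroup.closure (cs.simple '' J)) (hc : Commute w (s a)) {i : B}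
    (hi : cs.IsLeftDescent w i) : M i a = 2 := by
  have hia : i ≠ a := by rintro rfl; exact cs.not_isLeftDescent_of_mem_closure ha hw hi
  set β := ρ w⁻¹ (Pi.single i 1) with hβdef
  have hβ : β ≤ 0 :=
    cs.geometricRepresentation_apply_single_nonpos (cs.isRightDescent_inv_iff.mpr hi)
  have hβa : β a = 0 := by
    rw [hβdef, cs.geometricRepresentation_apply_apply_of_mem_closure ha (inv_mem hw)]
    exact Pi.single_eq_of_ne hia.symm _
  have hfix := cs.geometricRepresentation_apply_single_of_commute ha (inv_mem hw) hc.inv_left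
  have hform : M.cosForm β (Pi.single a 1) = -cos (π / M i a) := by
    rw [← hfix, cs.isOrthogonal_geometricRepresentation, M.cosForm_single_single]
  by_contra h2
  have := M.cosForm_apply_single_nonneg hβ hβa
  linarith [cos_pi_div_natCast_pos (M.off_diagonal i a hia) h2]

theorem mem_closure_of_mem_closure_of_commute (ha : a ∉ J) {w : W}
    (hw : w ∈ Subgroup.closure (cs.simple '' J)) (hc : Commute w (s a)) :
    w ∈ Subgroup.closure (cs.simple '' {i | i ∈ J ∧ M i a = 2}) := by
  induction hL : ℓ w using Nat.strong_induction_on generalizing w with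
  | _ L IH =>
    rcases eq_or_ne w 1 with rfl | hw1
    · exact one_mem _
    obtain ⟨i, hi⟩ := cs.exists_leftDescent_of_ne_one hw1
    have hiJ : i ∈ J := by
      by_contra h
      exact cs.not_isLeftDescent_of_mem_closure h hw hi
    have hia := cs.coxeterMatrix_eq_two_of_isLeftDescent ha hw hc hi
    have hlen := cs.isLeftDescent_iff.mp hi
    rw [← cs.simple_mul_simple_cancel_left (w := w) i]
    exact mul_mem (Subgroup.subset_closure ⟨i, ⟨hiJ, hia⟩, rfl⟩)
      (IH _ (by omega) (mul_mem (Subgroup.subset_closure ⟨i, hiJ, rfl⟩) hw)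
        ((cs.commute_simple_simple hia).mul_left hc) rfl)

theorem closure_inf_centralizer_simple (ha : a ∉ J) :
    Subgroup.closure (cs.simple '' J) ⊓ Subgroup.centralizer {s a} =
      Subgroup.closure (cs.simple '' {i | i ∈ J ∧ M i a = 2}) := by
  refine le_antisymm (fun w hw => ?_) (Subgroup.closure_le _ |>.mpr ?_)
  · obtain ⟨hw, hc⟩ := Subgroup.mem_inf.mp hw
    exact cs.mem_closure_of_mem_closure_of_commute ha hw
      (Subgroup.mem_centralizer_singleton_iff.mp hc)
  · rintro _ ⟨i, ⟨hiJ, hia⟩, rfl⟩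
    exact Subgroup.mem_inf.mpr ⟨Subgroup.subset_closure ⟨i, hiJ, rfl⟩,
      Subgroup.mem_centralizer_singleton_iff.mpr (cs.commute_simple_simple hia)⟩

end CoxeterSystem

/-- Let `W` be a finitely generated Coxeter group with generators `s 0, ..., s n`, let
`W' = ⟨s i : i ≠ n⟩` be the maximal parabolic subgroup, and let
`X = {i ≠ n : M i n = 2}`. Then the centralizer of `s n` in `W'` equals the standard
parabolic subgroup `W_X = ⟨s i : i ∈ X⟩`. -/
theorem stmt8 {n : ℕ} (M : CoxeterMatrix (Fin (n + 1))) {W : Type*} [Group W]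
    (cs : CoxeterSystem M W) :
    Subgroup.closure (cs.simple '' {i : Fin (n + 1) | i ≠ Fin.last n}) ⊓
        Subgroup.centralizer {cs.simple (Fin.last n)} =
      Subgroup.closure
        (cs.simple '' {i : Fin (n + 1) | i ≠ Fin.last n ∧ M i (Fin.last n) = 2}) :=
  cs.closure_inf_centralizer_simple (J := {i | i ≠ Fin.last n}) (fun h => h rfl)
end

section
/- Let W be a Coxeter group with generators s_1,...,s_n, suppose m_ij is odd for some i ≠ j, and let H ≤ W be a subgroup containing both s_j and s_i s_j s_i^{-1}. Then s_i ∈ H. -/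
theorem Subgroup.mem_of_mem_of_conj_mem_of_odd {G : Type*} [Group G] {H : Subgroup G}
    {s t : G} {m : ℕ} (hs : s * s = 1) (hts : (t * s) ^ m = 1) (hm : Odd m)
    (ht : t ∈ H) (hconj : s * t * s⁻¹ ∈ H) : s ∈ H := by
  obtain ⟨k, rfl⟩ := hm
  have hinv : s⁻¹ = s := inv_eq_of_mul_eq_one_right hs
  have hsq : t * (s * t * s⁻¹) = (t * s) ^ 2 := by
    rw [hinv, sq]; group
  have heven : (t * s) ^ (2 * k) = (t * s)⁻¹ :=
    eq_inv_of_mul_eq_one_left (by rwa [← pow_succ])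
  have hs_eq : s⁻¹ = (t * (s * t * s⁻¹)) ^ k * t := by
    rw [hsq, ← pow_mul, heven]; group
  rw [← inv_mem_iff, hs_eq]
  exact mul_mem (pow_mem (mul_mem ht hconj) k) ht

theorem stmt16_general {n : ℕ} (M : CoxeterMatrix (Fin n)) {W : Type*} [Group W]
    (cs : CoxeterSystem M W) (i j : Fin n) (hodd : Odd (M i j))
    (H : Subgroup W) (hj : cs.simple j ∈ H)
    (hconj : cs.simple i * cs.simple j * (cs.simple i)⁻¹ ∈ H) :
    cs.simple i ∈ H := by
  have hpow : (cs.simple j * cs.simple i) ^ M i j = 1 := by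
    simpa only [M.symmetric j i] using cs.simple_mul_simple_pow j i
  exact H.mem_of_mem_of_conj_mem_of_odd (cs.simple_mul_simple_self i) hpow hodd hj hconj

/-- Let `W` be a Coxeter group with generators `s i`, suppose `M i j` is odd for some
`i ≠ j`, and let `H ≤ W` be a subgroup containing both `s j` and `s i * s j * (s i)⁻¹`.
Then `s i ∈ H`. -/
theorem stmt16 {n : ℕ} (M : CoxeterMatrix (Fin n)) {W : Type*} [Group W]
    (cs : CoxeterSystem M W) (i j : Fin n) (hij : i ≠ j) (hodd : Odd (M i j))
    (H : Subgroup W) (hj : cs.simple j ∈ H)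
    (hconj : cs.simple i * cs.simple j * (cs.simple i)⁻¹ ∈ H) :
    cs.simple i ∈ H :=
  stmt16_general M cs i j hodd H hj hconj
end

section
/- Let W be a Coxeter group with generators s_1,...,s_n, W' = ⟨s_1,...,s_{n-1}⟩ with finite index centralizer C_{W'}(s_n), and let t_1,...,t_m be the W'-conjugates of s_n with t_1 = s_n. Then W is isomorphic to the quotient of the semidirect product (C_2)^{*m} ⋊ W' (W' permuting the free factors as it permutes the t_k by conjugation) by the normal closure of the relations (s_i t_1)^{m_in} = 1 for those i < n with m_in > 2. -/
/-!
Sending `S_i ↦ s_i` and `T_k ↦ t_k` respects every defining relation, so it gives a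
homomorphism `f` from the presented group `Γ` onto `W`. Conversely, `s_i ↦ S_i`, `s_n ↦ T_0`
satisfies the Coxeter relations of `W`: the only one not imposed in `Γ` is `(S_i T_0)² = 1`
when `m_in = 2`, and then `s_i` commutes with `s_n`, so `π i` fixes `0` and `S_i` commutes
with `T_0`. This gives `g : W → Γ` with `f ∘ g = id`. For `g ∘ f = id` it remains to see
`g t_k = T_k`: writing `t_k = w⁻¹ s_n w` with `w ∈ W'`, this holds because the elements of `W`
whose conjugation action on the `t_k` is matched under `g` by one on the `T_k` form a subgroup,
which contains the generators of `W'`.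
-/

theorem mul_pow_eq_one_comm {G : Type*} [Group G] {a b : G} {k : ℕ} :
    (a * b) ^ k = 1 ↔ (b * a) ^ k = 1 := by
  rw [show b * a = a⁻¹ * (a * b) * a⁻¹⁻¹ by group, conj_pow, conj_eq_one_iff]

def conjCompatibleSubgroup {W G κ : Type*} [Group W] [Group G] (f : W →* G) (t : κ → W)
    (T : κ → G) : Subgroup W where
  carrier := {x | ∃ σ : Equiv.Perm κ,
    ∀ k, t (σ k) = x⁻¹ * t k * x ∧ T (σ k) = (f x)⁻¹ * T k * f x}
  one_mem' := ⟨1, by simp⟩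
  mul_mem' := by
    rintro x y ⟨σ, hσ⟩ ⟨τ, hτ⟩
    refine ⟨σ.trans τ, fun k => ?_⟩
    simp only [Equiv.trans_apply, (hτ _).1, (hτ _).2, (hσ k).1, (hσ k).2, map_mul]
    constructor <;> group
  inv_mem' := by
    rintro x ⟨σ, hσ⟩
    refine ⟨σ.symm, fun k => ?_⟩
    obtain ⟨ht, hT⟩ := hσ (σ.symm k)
    rw [Equiv.apply_symm_apply] at ht hT
    rw [ht, hT, map_inv]
    constructor <;> group

variable {n m : ℕ}

open PresentedGroup

/-- The relations of the theorem, with `S_i = of (inl i)` and `T_k = of (inr k)`. -/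
def coxeterSymmetricRels (M : CoxeterMatrix (Fin (n + 1)))
    (π : Fin n → Equiv.Perm (Fin (m + 1))) : Set (FreeGroup (Fin n ⊕ Fin (m + 1))) :=
  (Set.range fun p : Fin n × Fin n =>
    (FreeGroup.of (Sum.inl p.1) * FreeGroup.of (Sum.inl p.2)) ^
      M p.1.castSucc p.2.castSucc) ∪
  {FreeGroup.of (Sum.inr 0) ^ 2} ∪
  (Set.range fun p : Fin n × Fin (m + 1) =>
    (FreeGroup.of (Sum.inl p.1))⁻¹ * FreeGroup.of (Sum.inr p.2) *
      FreeGroup.of (Sum.inl p.1) * (FreeGroup.of (Sum.inr (π p.1 p.2)))⁻¹) ∪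
  {x | ∃ i : Fin n, 2 < M i.castSucc (Fin.last n) ∧
    x = (FreeGroup.of (Sum.inl i) * FreeGroup.of (Sum.inr 0)) ^
      M i.castSucc (Fin.last n)}

namespace coxeterSymmetricRels

variable {M : CoxeterMatrix (Fin (n + 1))} {π : Fin n → Equiv.Perm (Fin (m + 1))}

theorem of_inl_mul_of_inl_pow (i j : Fin n) :
    (of (.inl i) * of (.inl j) : PresentedGroup (coxeterSymmetricRels M π)) ^
      M i.castSucc j.castSucc = 1 :=
  one_of_mem (.inl (.inl (.inl ⟨(i, j), rfl⟩)))

theorem of_inl_mul_self (i : Fin n) :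
    (of (.inl i) * of (.inl i) : PresentedGroup (coxeterSymmetricRels M π)) = 1 := by
  simpa using of_inl_mul_of_inl_pow (M := M) (π := π) i i

theorem of_inr_zero_sq : (of (.inr 0) : PresentedGroup (coxeterSymmetricRels M π)) ^ 2 = 1 :=
  one_of_mem (.inl (.inl (.inr rfl)))

theorem of_inl_inv_mul_of_inr_mul_of_inl (i : Fin n) (k : Fin (m + 1)) :
    ((of (.inl i))⁻¹ * of (.inr k) * of (.inl i) : PresentedGroup (coxeterSymmetricRels M π)) =
      of (.inr (π i k)) :=
  eq_of_mul_inv_eq_one (one_of_mem (.inl (.inr ⟨(i, k), rfl⟩)))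

theorem of_inl_mul_of_inr_zero_pow (i : Fin n)
    (hfix : M i.castSucc (Fin.last n) = 2 → π i 0 = 0) :
    (of (.inl i) * of (.inr 0) : PresentedGroup (coxeterSymmetricRels M π)) ^
      M i.castSucc (Fin.last n) = 1 := by
  obtain h | h | h | h : M i.castSucc (Fin.last n) = 0 ∨ M i.castSucc (Fin.last n) = 1 ∨
      M i.castSucc (Fin.last n) = 2 ∨ 2 < M i.castSucc (Fin.last n) := by omega
  · simp [h]
  · exact absurd h (M.off_diagonal _ _ (Fin.castSucc_lt_last i).ne)
  · rw [h, sq, ← of_inr_zero_sq (M := M) (π := π), sq]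
    calc (of (.inl i) * of (.inr 0) * (of (.inl i) * of (.inr 0)) :
          PresentedGroup (coxeterSymmetricRels M π))
        = of (.inl i) * of (.inl i) * ((of (.inl i))⁻¹ * of (.inr 0) * of (.inl i)) *
            of (.inr 0) := by group
      _ = of (.inr 0) * of (.inr 0) := by
        rw [of_inl_inv_mul_of_inr_mul_of_inl, hfix h, of_inl_mul_self, one_mul]
  · exact one_of_mem (.inr ⟨i, h, rfl⟩)

theorem isLiftable_lastCases (hfix : ∀ i : Fin n, M i.castSucc (Fin.last n) = 2 → π i 0 = 0) :
    M.IsLiftable (Fin.lastCases (of (.inr 0)) fun i => of (.inl i) :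
      Fin (n + 1) → PresentedGroup (coxeterSymmetricRels M π)) := by
  intro i j
  induction i using Fin.lastCases with
  | last =>
    induction j using Fin.lastCases with
    | last => simpa [← sq] using of_inr_zero_sq
    | cast j =>
      simpa [M.symmetric] using mul_pow_eq_one_comm.mp (of_inl_mul_of_inr_zero_pow j (hfix j))
  | cast i =>
    induction j using Fin.lastCases with
    | last => simpa using of_inl_mul_of_inr_zero_pow i (hfix i)
    | cast j => simpa using of_inl_mul_of_inl_pow i j

end coxeterSymmetricRels

namespace CoxeterSystem

variable {M : CoxeterMatrix (Fin (n + 1))} {π : Fin n → Equiv.Perm (Fin (m + 1))}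
  {W : Type*} [Group W] (cs : CoxeterSystem M W) {t : Fin (m + 1) → W}

def toSymmetricPresentation
    (hfix : ∀ i : Fin n, M i.castSucc (Fin.last n) = 2 → π i 0 = 0) :
    W →* PresentedGroup (coxeterSymmetricRels M π) :=
  cs.lift ⟨_, coxeterSymmetricRels.isLiftable_lastCases hfix⟩

theorem toSymmetricPresentation_simple_last
    (hfix : ∀ i : Fin n, M i.castSucc (Fin.last n) = 2 → π i 0 = 0) :
    cs.toSymmetricPresentation hfix (cs.simple (Fin.last n)) = of (.inr 0) := by
  simp [toSymmetricPresentation, cs.lift_apply_simple]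

theorem toSymmetricPresentation_simple_castSucc
    (hfix : ∀ i : Fin n, M i.castSucc (Fin.last n) = 2 → π i 0 = 0) (i : Fin n) :
    cs.toSymmetricPresentation hfix (cs.simple i.castSucc) = of (.inl i) := by
  simp [toSymmetricPresentation, cs.lift_apply_simple]

theorem lift_eq_one_of_mem_coxeterSymmetricRels (ht0 : t 0 = cs.simple (Fin.last n))
    (hπ : ∀ i k, t (π i k) = (cs.simple i.castSucc)⁻¹ * t k * cs.simple i.castSucc) :
    ∀ r ∈ coxeterSymmetricRels M π,
      FreeGroup.lift (Sum.elim (fun i => cs.simple i.castSucc) t) r = 1 := by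
  rintro r (((⟨⟨i, j⟩, rfl⟩ | rfl) | ⟨⟨i, k⟩, rfl⟩) | ⟨i, -, rfl⟩)
  · simp
  · simp [ht0]
  · simp only [map_mul, map_inv, FreeGroup.lift_apply_of, Sum.elim_inl, Sum.elim_inr, hπ]
    group
  · simp [ht0]

theorem perm_zero_eq_zero_of_eq_two (ht0 : t 0 = cs.simple (Fin.last n))
    (htinj : Function.Injective t)
    (hπ : ∀ i k, t (π i k) = (cs.simple i.castSucc)⁻¹ * t k * cs.simple i.castSucc)
    (i : Fin n) (h : M i.castSucc (Fin.last n) = 2) : π i 0 = 0 := by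
  have hcomm := cs.simple_mul_simple_pow i.castSucc (Fin.last n)
  rw [h, sq, ← mul_assoc, mul_eq_one_iff_eq_inv, cs.inv_simple] at hcomm
  exact htinj (by rw [hπ, ht0, cs.inv_simple, hcomm])

theorem closure_le_conjCompatibleSubgroup
    (hπ : ∀ i k, t (π i k) = (cs.simple i.castSucc)⁻¹ * t k * cs.simple i.castSucc)
    (hfix : ∀ i : Fin n, M i.castSucc (Fin.last n) = 2 → π i 0 = 0) :
    Subgroup.closure (cs.simple '' {i | i ≠ Fin.last n}) ≤
      conjCompatibleSubgroup (cs.toSymmetricPresentation hfix) t fun k => of (.inr k) := by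
  rw [Subgroup.closure_le]
  rintro _ ⟨i, hi, rfl⟩
  rw [← Fin.castSucc_castPred i hi]
  refine ⟨π (i.castPred hi), fun k => ⟨hπ _ k, ?_⟩⟩
  rw [toSymmetricPresentation_simple_castSucc,
    coxeterSymmetricRels.of_inl_inv_mul_of_inr_mul_of_inl]

theorem toSymmetricPresentation_apply (ht0 : t 0 = cs.simple (Fin.last n))
    (htinj : Function.Injective t)
    (htrange : Set.range t =
      {x : W | ∃ w ∈ Subgroup.closure (cs.simple '' {i | i ≠ Fin.last n}),
        x = w⁻¹ * cs.simple (Fin.last n) * w})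
    (hπ : ∀ i k, t (π i k) = (cs.simple i.castSucc)⁻¹ * t k * cs.simple i.castSucc)
    (hfix : ∀ i : Fin n, M i.castSucc (Fin.last n) = 2 → π i 0 = 0) (k : Fin (m + 1)) :
    cs.toSymmetricPresentation hfix (t k) = of (.inr k) := by
  obtain ⟨w, hw, htk⟩ : t k ∈ _ := htrange ▸ Set.mem_range_self k
  obtain ⟨σ, hσ⟩ := cs.closure_le_conjCompatibleSubgroup hπ hfix hw
  obtain ⟨hσt, hσT⟩ := hσ 0
  have hσ0 : σ 0 = k := htinj (by rw [hσt, htk, ht0])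
  rw [htk, map_mul, map_mul, map_inv, toSymmetricPresentation_simple_last, ← hσT, hσ0]

end CoxeterSystem

/-- **Main theorem (symmetric presentation of Coxeter groups).**
Let `W` be a finitely generated Coxeter group with generators `s_0, ..., s_n` (indexed by
`Fin (n+1)`, the last one playing the role of `s_n`), let `W' = ⟨s_i : i ≠ n⟩` be the maximal
parabolic subgroup, and assume the centralizer `C_{W'}(s_n)` has finite index in `W'`, so
that the `W'`-conjugates of `s_n` form a finite set `t_0, ..., t_m` with `t_0 = s_n`, on
which `W'` acts by conjugation via the permutations `π i` (for the generators `s_i` of `W'`).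
Then `W` is isomorphic to the quotient of the progenitor `2^{*(m+1)} : W'` — presented on
generators `S_i` (`i ≠ n`) and `T_0, ..., T_m` with the Coxeter relations of `W'`, the
relation `T_0² = 1`, and the conjugation relations `S_i⁻¹ T_k S_i = T_{k^{π(s_i)}}` — by the
normal closure of the additional relations `(S_i T_0)^{m_{i n}} = 1` for those `i` with
`m_{i n} > 2`; moreover the isomorphism sends `S_i` to `s_i` and `T_k` to `t_k`. -/
theorem stmt18 {n m : ℕ} (M : CoxeterMatrix (Fin (n + 1))) {W : Type*} [Group W]
    (cs : CoxeterSystem M W)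
    (W' : Subgroup W)
    (hW' : W' = Subgroup.closure (cs.simple '' {i : Fin (n + 1) | i ≠ Fin.last n}))
    (t : Fin (m + 1) → W)
    (ht0 : t 0 = cs.simple (Fin.last n))
    (htinj : Function.Injective t)
    (htrange : Set.range t = {x : W | ∃ w ∈ W', x = w⁻¹ * cs.simple (Fin.last n) * w})
    (π : Fin n → Equiv.Perm (Fin (m + 1)))
    (hπ : ∀ (i : Fin n) (k : Fin (m + 1)),
      t (π i k) = (cs.simple i.castSucc)⁻¹ * t k * cs.simple i.castSucc)
    (rels : Set (FreeGroup (Fin n ⊕ Fin (m + 1))))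
    (hrels : rels =
      (Set.range fun p : Fin n × Fin n =>
        (FreeGroup.of (Sum.inl p.1) * FreeGroup.of (Sum.inl p.2)) ^
          M p.1.castSucc p.2.castSucc) ∪
      {FreeGroup.of (Sum.inr 0) ^ 2} ∪
      (Set.range fun p : Fin n × Fin (m + 1) =>
        (FreeGroup.of (Sum.inl p.1))⁻¹ * FreeGroup.of (Sum.inr p.2) *
          FreeGroup.of (Sum.inl p.1) * (FreeGroup.of (Sum.inr (π p.1 p.2)))⁻¹) ∪
      {x | ∃ i : Fin n, 2 < M i.castSucc (Fin.last n) ∧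
        x = (FreeGroup.of (Sum.inl i) * FreeGroup.of (Sum.inr 0)) ^
          M i.castSucc (Fin.last n)}) :
    ∃ e : PresentedGroup rels ≃* W,
      (∀ i : Fin n, e (PresentedGroup.of (Sum.inl i)) = cs.simple i.castSucc) ∧
      (∀ k : Fin (m + 1), e (PresentedGroup.of (Sum.inr k)) = t k) := by
  change rels = coxeterSymmetricRels M π at hrels
  subst hrels hW'
  have hfix := cs.perm_zero_eq_zero_of_eq_two ht0 htinj hπ
  set f := PresentedGroup.toGroup (cs.lift_eq_one_of_mem_coxeterSymmetricRels ht0 hπ)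
  have hf : ∀ x, f (of x) = Sum.elim (fun i => cs.simple i.castSucc) t x := fun _ =>
    PresentedGroup.toGroup.of _
  refine ⟨f.toMulEquiv (cs.toSymmetricPresentation hfix) ?_ ?_, fun i => hf (.inl i),
    fun k => hf (.inr k)⟩
  · refine PresentedGroup.ext fun x => ?_
    cases x with
    | inl i => simp [hf, cs.toSymmetricPresentation_simple_castSucc]
    | inr k => simp [hf, cs.toSymmetricPresentation_apply ht0 htinj htrange hπ hfix]
  · refine cs.ext_simple fun i => ?_
    induction i using Fin.lastCases with
    | last => simp [cs.toSymmetricPresentation_simple_last, hf, ht0]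
    | cast i => simp [cs.toSymmetricPresentation_simple_castSucc, hf]
end
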